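/- For every integer n ≥ 1 let N_n be the Λ₁-module with k-basis t_1,…,t_{n+1}, s_1,…,s_{n+1} and action α(t_j) = s_j for 1 ≤ j ≤ n+1, δ(t_j) = s_{j+1} for 1 ≤ j ≤ n, δ(t_{n+1}) = 0, and α(s_j) = δ(s_j) = 0 for all j (this is the string module M((αδ^{−1})^n α)). Then the map f defined by f(t_1) = t_{n+1}, f(s_1) = s_{n+1} and f = 0 on all other basis vectors is a Λ₁-module endomorphism of N_n, and for every c ∈ k the endomorphism f − c·id does not factor through a projective Λ₁-module. In particular the stable endomorphism ring of N_n is not isomorphic to k. -/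

import Mathlib

/-! Common framework: modules over the generalized Brauer star algebra with one
edge, `Λ₁ = k⟨α,δ⟩/(αδ, δα, α² − δ²)`, encoded as a module `V` together with two
endomorphisms `A` (the action of `α`) and `D` (the action of `δ`). -/

namespace GBTAone

structure Mod1 (R : Type) [CommRing R] : Type 1 where
  V : Type
  [instAdd : AddCommGroup V]
  [instMod : Module R V]
  A : Module.End R V
  D : Module.End R V

attribute [instance] Mod1.instAdd Mod1.instMod

variable {R : Type} [CommRing R]

/-- The defining relations of `Λ₁`: `αδ = δα = 0` and `α² = δ²`. -/
def Satisfies1 (ρ : Mod1 R) : Prop :=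
  ρ.A * ρ.D = 0 ∧ ρ.D * ρ.A = 0 ∧ ρ.A * ρ.A = ρ.D * ρ.D

/-- The space of `Λ₁`-module homomorphisms `ρ → σ`. -/
def homSet1 (ρ σ : Mod1 R) : Submodule R (ρ.V →ₗ[R] σ.V) where
  carrier := {f | f ∘ₗ ρ.A = σ.A ∘ₗ f ∧ f ∘ₗ ρ.D = σ.D ∘ₗ f}
  add_mem' := by
    rintro f g ⟨hfa, hfd⟩ ⟨hga, hgd⟩
    exact ⟨by simp only [LinearMap.add_comp, LinearMap.comp_add, hfa, hga],
      by simp only [LinearMap.add_comp, LinearMap.comp_add, hfd, hgd]⟩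
  zero_mem' := ⟨by simp, by simp⟩
  smul_mem' := by
    rintro c f ⟨hfa, hfd⟩
    exact ⟨by simp only [LinearMap.smul_comp, LinearMap.comp_smul, hfa],
      by simp only [LinearMap.smul_comp, LinearMap.comp_smul, hfd]⟩

/-- Projectivity of a `Λ₁`-module, via the lifting property in the category of
`Λ₁`-modules. -/
def IsProjective1 (P : Mod1 R) : Prop :=
  Satisfies1 P ∧
  ∀ (A B : Mod1 R), Satisfies1 A → Satisfies1 B →
    ∀ p ∈ homSet1 A B, Function.Surjective p →
      ∀ g ∈ homSet1 P B, ∃ h ∈ homSet1 P A, p ∘ₗ h = g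

/-- An endomorphism `f` of `ρ` factors through a projective `Λ₁`-module. -/
def FactorsThroughProjective1 (ρ : Mod1 R) (f : ρ.V →ₗ[R] ρ.V) : Prop :=
  ∃ P : Mod1 R, IsProjective1 P ∧ ∃ g ∈ homSet1 ρ P, ∃ h ∈ homSet1 P ρ, f = h ∘ₗ g

/-- "The stable endomorphism ring of `ρ` is isomorphic to the scalars". -/
def StableEndIsoScalars1 (ρ : Mod1 R) : Prop :=
  (¬ FactorsThroughProjective1 ρ LinearMap.id) ∧
  ∀ f ∈ homSet1 ρ ρ, ∃ c : R, FactorsThroughProjective1 ρ (f - c • LinearMap.id)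

/-- The linear map on `Fin m → W` sending the `src` coordinate to the `dst`
coordinate through `g`, and killing all other coordinates. -/
def mk1 {m : ℕ} {W : Type} [AddCommGroup W] [Module R W] (src dst : Fin m)
    (g : W →ₗ[R] W) : (Fin m → W) →ₗ[R] (Fin m → W) where
  toFun x := fun r => if r = dst then g (x src) else 0
  map_add' x y := by funext r; by_cases h : r = dst <;> simp [h]
  map_smul' c x := by funext r; by_cases h : r = dst <;> simp [h]

/-- The map `(x, y) ↦ (0, x)` on `W × W`. -/
def sh (R W : Type) [CommRing R] [AddCommGroup W] [Module R W] :
    (W × W) →ₗ[R] (W × W) :=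
  LinearMap.prod 0 (LinearMap.fst R W W)

/-- The module `M(α)`: `k²` with `α(x,y) = (0,x)` and `δ = 0`. -/
@[reducible] def Malpha (k : Type) [CommRing k] : Mod1 k where
  V := k × k
  A := sh k k
  D := 0

/-- The module `M(δ)`: `k²` with `δ(x,y) = (0,x)` and `α = 0`. -/
@[reducible] def Mdelta (k : Type) [CommRing k] : Mod1 k where
  V := k × k
  A := 0
  D := sh k k

/-- The regular module `Λ₁`, with basis `1, α, δ, α²` (coordinates `0,1,2,3`). -/
@[reducible] def reg (k : Type) [CommRing k] : Mod1 k where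
  V := Fin 4 → k
  A := mk1 0 1 LinearMap.id + mk1 1 3 LinearMap.id
  D := mk1 0 2 LinearMap.id + mk1 2 3 LinearMap.id

/-- The simple `Λ₁`-module `S₁`. -/
@[reducible] def S1 (k : Type) [CommRing k] : Mod1 k where
  V := k
  A := 0
  D := 0


/-- The shift `x ↦ (0, x_0, x_1, …, x_{n-1})` on `Fin (n+1) → k`. -/
def shiftDown (k : Type) [CommRing k] (n : ℕ) :
    (Fin (n + 1) → k) →ₗ[k] (Fin (n + 1) → k) where
  toFun x := fun i =>
    if h : i.val = 0 then 0
    else x ⟨i.val - 1, lt_of_le_of_lt (Nat.sub_le _ _) i.isLt⟩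
  map_add' x y := by funext i; by_cases h : i = 0 <;> simp [h]
  map_smul' c x := by funext i; by_cases h : i = 0 <;> simp [h]

/-- The string module `N_n = M((αδ⁻¹)ⁿα)`, with basis `t_1, …, t_{n+1}`
(first factor) and `s_1, …, s_{n+1}` (second factor); `α(t_j) = s_j`,
`δ(t_j) = s_{j+1}` (`j ≤ n`), `δ(t_{n+1}) = 0`, `α(s_j) = δ(s_j) = 0`. -/
@[reducible] def Nmod (k : Type) [CommRing k] (n : ℕ) : Mod1 k where
  V := (Fin (n + 1) → k) × (Fin (n + 1) → k)
  A := LinearMap.prod 0 (LinearMap.fst k _ _)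
  D := LinearMap.prod 0 (shiftDown k n ∘ₗ LinearMap.fst k _ _)

/-- The endomorphism `f` of `N_n`: `t_1 ↦ t_{n+1}`, `s_1 ↦ s_{n+1}`, all other
basis vectors to `0`. -/
def f7 (k : Type) [CommRing k] (n : ℕ) :
    ((Fin (n + 1) → k) × (Fin (n + 1) → k)) →ₗ[k]
      ((Fin (n + 1) → k) × (Fin (n + 1) → k)) :=
  LinearMap.prodMap (mk1 0 ⟨n, Nat.lt_succ_self n⟩ LinearMap.id)
    (mk1 0 ⟨n, Nat.lt_succ_self n⟩ LinearMap.id)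

/-! A projective `Λ₁`-module `P` is a retract of a free one, and the socle of `Λ₁` (the
vectors killed by `α` and `δ`) is `k α²`; hence every vector of `P` killed by `α` and `δ` lies
in `α² P`. A map `N_n → P → N_n` therefore kills the socle vector `s₁`, because `α² = 0` on
`N_n`. But `(f - c)(s₁) = s_{n+1} - c s₁ ≠ 0` as soon as `n ≥ 1`. -/

lemma mk1_apply {m : ℕ} {W : Type} [AddCommGroup W] [Module R W] (src dst : Fin m)
    (g : W →ₗ[R] W) (x : Fin m → W) (r : Fin m) :
    mk1 src dst g x r = if r = dst then g (x src) else 0 := rfl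

lemma map_A_of_mem_homSet1 {ρ σ : Mod1 R} {f : ρ.V →ₗ[R] σ.V} (hf : f ∈ homSet1 ρ σ)
    (x : ρ.V) : f (ρ.A x) = σ.A (f x) :=
  DFunLike.congr_fun hf.1 x

lemma map_D_of_mem_homSet1 {ρ σ : Mod1 R} {f : ρ.V →ₗ[R] σ.V} (hf : f ∈ homSet1 ρ σ)
    (x : ρ.V) : f (ρ.D x) = σ.D (f x) :=
  DFunLike.congr_fun hf.2 x

namespace Satisfies1

variable {P : Mod1 R} (hP : Satisfies1 P) (x : P.V)
include hP

lemma A_D_apply : P.A (P.D x) = 0 := by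
  simpa using LinearMap.congr_fun hP.1 x

lemma D_A_apply : P.D (P.A x) = 0 := by
  simpa using LinearMap.congr_fun hP.2.1 x

lemma D_D_apply : P.D (P.D x) = P.A (P.A x) := by
  simpa using (LinearMap.congr_fun hP.2.2 x).symm

lemma A_A_A_apply : P.A (P.A (P.A x)) = 0 := by
  rw [← hP.D_D_apply x, hP.A_D_apply]

end Satisfies1

lemma satisfies1_reg : Satisfies1 (reg R) := by
  refine ⟨?_, ?_, ?_⟩ <;>
  · ext c r
    fin_cases r <;> simp [mk1_apply]

lemma reg_A_A_single_of_socle {c : Fin 4 → R} (hA : (reg R).A c = 0) (hD : (reg R).D c = 0) :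
    (reg R).A ((reg R).A (Pi.single 0 (c 3))) = c := by
  change _ = (0 : Fin 4 → R) at hA hD
  have h0 : c 0 = 0 := by simpa [mk1_apply] using congrFun hA 1
  have h1 : c 1 = 0 := by simpa [mk1_apply] using congrFun hA 3
  have h2 : c 2 = 0 := by simpa [mk1_apply] using congrFun hD 3
  funext r
  fin_cases r <;> simp [mk1_apply, h0, h1, h2]

@[reducible] noncomputable def freeOn (ι : Type) : Mod1 R where
  V := ι →₀ (Fin 4 → R)
  A := Finsupp.mapRange.linearMap (reg R).A
  D := Finsupp.mapRange.linearMap (reg R).D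

lemma satisfies1_freeOn (ι : Type) : Satisfies1 (freeOn (R := R) ι) := by
  have h := satisfies1_reg (R := R)
  refine ⟨?_, ?_, ?_⟩ <;>
  · refine Finsupp.lhom_ext fun i c => ?_
    simp only [Module.End.mul_apply, Finsupp.mapRange.linearMap_apply, Finsupp.mapRange_single,
      LinearMap.zero_apply, Finsupp.single_zero, h.A_D_apply, h.D_A_apply, h.D_D_apply]

lemma freeOn_exists_A_A_eq {ι : Type} {φ : ι →₀ (Fin 4 → R)} (hA : (freeOn ι).A φ = 0)
    (hD : (freeOn ι).D φ = 0) : ∃ ψ, (freeOn ι).A ((freeOn ι).A ψ) = φ := by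
  refine ⟨φ.mapRange (fun c => Pi.single 0 (c 3)) (by simp), ?_⟩
  ext1 i
  exact reg_A_A_single_of_socle (DFunLike.congr_fun hA i) (DFunLike.congr_fun hD i)

section FreeCover

variable (P : Mod1 R)

noncomputable def orbitMap (x : P.V) : (reg R).V →ₗ[R] P.V where
  toFun c := c 0 • x + c 1 • P.A x + c 2 • P.D x + c 3 • P.A (P.A x)
  map_add' a b := by simp only [Pi.add_apply, add_smul]; abel
  map_smul' a b := by simp [mul_smul, smul_add]

noncomputable def freeCover : (freeOn (R := R) P.V).V →ₗ[R] P.V :=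
  Finsupp.lsum ℕ (orbitMap P)

lemma freeCover_surjective : Function.Surjective (freeCover P) := fun y =>
  ⟨Finsupp.single y (Pi.single 0 1), by simp [freeCover, orbitMap]⟩

variable {P}

lemma orbitMap_mem_homSet1 (hP : Satisfies1 P) (x : P.V) : orbitMap P x ∈ homSet1 (reg R) P := by
  constructor <;>
  · refine LinearMap.ext fun c => ?_
    simp [orbitMap, mk1_apply, hP.A_D_apply, hP.D_A_apply, hP.D_D_apply, hP.A_A_A_apply]

lemma freeCover_mem_homSet1 (hP : Satisfies1 P) : freeCover P ∈ homSet1 (freeOn P.V) P := by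
  constructor <;> refine Finsupp.lhom_ext fun x c => ?_ <;>
    simp only [LinearMap.comp_apply, Finsupp.mapRange.linearMap_apply, Finsupp.mapRange_single,
      freeCover, Finsupp.lsum_single]
  · exact map_A_of_mem_homSet1 (orbitMap_mem_homSet1 hP x) c
  · exact map_D_of_mem_homSet1 (orbitMap_mem_homSet1 hP x) c

end FreeCover

namespace IsProjective1

variable {P : Mod1 R} (hP : IsProjective1 P)
include hP

lemma exists_section : ∃ s ∈ homSet1 P (freeOn P.V), freeCover P ∘ₗ s = LinearMap.id :=
  hP.2 _ _ (satisfies1_freeOn _) hP.1 _ (freeCover_mem_homSet1 hP.1) (freeCover_surjective P) _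
    ⟨by simp, by simp⟩

lemma exists_A_A_eq {y : P.V} (hA : P.A y = 0) (hD : P.D y = 0) : ∃ z, P.A (P.A z) = y := by
  obtain ⟨s, hs, hsec⟩ := hP.exists_section
  obtain ⟨ψ, hψ⟩ := freeOn_exists_A_A_eq (φ := s y)
    (by rw [← map_A_of_mem_homSet1 hs, hA, map_zero])
    (by rw [← map_D_of_mem_homSet1 hs, hD, map_zero])
  have hc := freeCover_mem_homSet1 hP.1
  refine ⟨freeCover P ψ, ?_⟩
  rw [← map_A_of_mem_homSet1 hc, ← map_A_of_mem_homSet1 hc, hψ]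
  exact LinearMap.congr_fun hsec y

end IsProjective1

lemma FactorsThroughProjective1.apply_eq_zero {ρ : Mod1 R} (hρ : ∀ x, ρ.A (ρ.A x) = 0)
    {f : ρ.V →ₗ[R] ρ.V} (hf : FactorsThroughProjective1 ρ f) {y : ρ.V}
    (hA : ρ.A y = 0) (hD : ρ.D y = 0) : f y = 0 := by
  obtain ⟨P, hP, g, hg, h, hh, rfl⟩ := hf
  obtain ⟨z, hz⟩ := hP.exists_A_A_eq (y := g y)
    (by rw [← map_A_of_mem_homSet1 hg, hA, map_zero])
    (by rw [← map_D_of_mem_homSet1 hg, hD, map_zero])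
  rw [LinearMap.comp_apply, ← hz, map_A_of_mem_homSet1 hh, map_A_of_mem_homSet1 hh, hρ]

section StringModule

variable (k : Type) [CommRing k] (n : ℕ)

lemma shiftDown_apply (x : Fin (n + 1) → k) (i : Fin (n + 1)) :
    shiftDown k n x i = if i.val = 0 then 0
      else x ⟨i.val - 1, lt_of_le_of_lt (Nat.sub_le _ _) i.isLt⟩ := rfl

lemma Nmod_A_A_apply (x : (Nmod k n).V) : (Nmod k n).A ((Nmod k n).A x) = 0 := rfl

lemma Nmod_A_inr (s : Fin (n + 1) → k) : (Nmod k n).A (0, s) = 0 := rfl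

lemma Nmod_D_inr (s : Fin (n + 1) → k) : (Nmod k n).D (0, s) = 0 := by
  simp

lemma mk1_zero_last_shiftDown (x : Fin (n + 1) → k) :
    mk1 (R := k) 0 ⟨n, n.lt_succ_self⟩ LinearMap.id (shiftDown k n x) = 0 := by
  funext r
  simp [mk1_apply, shiftDown_apply]

lemma shiftDown_mk1_zero_last (x : Fin (n + 1) → k) :
    shiftDown k n (mk1 (R := k) 0 ⟨n, n.lt_succ_self⟩ LinearMap.id x) = 0 := by
  funext r
  simp only [shiftDown_apply, mk1_apply, Fin.ext_iff]
  split_ifs <;> first | rfl | omega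

lemma f7_mem_homSet1 : f7 k n ∈ homSet1 (Nmod k n) (Nmod k n) := by
  constructor <;> refine LinearMap.ext fun x => Prod.ext ?_ ?_
  all_goals simp [f7, mk1_zero_last_shiftDown, shiftDown_mk1_zero_last]

lemma f7_sub_smul_id_apply_inr_single (hn : n ≠ 0) (c : k) :
    ((f7 k n - c • LinearMap.id : (Nmod k n).V →ₗ[k] (Nmod k n).V) (0, Pi.single 0 1)).2
      ⟨n, n.lt_succ_self⟩ = 1 := by
  simp [f7, mk1_apply, Fin.ext_iff, hn]

end StringModule

/-- The map `f` is a `Λ₁`-module endomorphism of `N_n`, and for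
every `c ∈ k` the endomorphism `f - c·id` does not factor through a projective
`Λ₁`-module; in particular the stable endomorphism ring of `N_n` is not
isomorphic to `k`. -/
theorem Nn_stable_end_not_k (k : Type) [Field k] (n : ℕ) (hn : 1 ≤ n) :
    f7 k n ∈ homSet1 (Nmod k n) (Nmod k n) ∧
    (∀ c : k, ¬ FactorsThroughProjective1 (Nmod k n) (f7 k n - c • LinearMap.id)) ∧
    ¬ StableEndIsoScalars1 (Nmod k n) := by
  have hf := f7_mem_homSet1 k n
  have hnot : ∀ c : k, ¬ FactorsThroughProjective1 (Nmod k n) (f7 k n - c • LinearMap.id) := by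
    intro c hc
    have hzero := hc.apply_eq_zero (Nmod_A_A_apply k n) (Nmod_A_inr k n (Pi.single 0 1))
      (Nmod_D_inr k n (Pi.single 0 1))
    have hone := f7_sub_smul_id_apply_inr_single k n (by omega) c
    rw [hzero] at hone
    exact zero_ne_one hone
  refine ⟨hf, hnot, fun ⟨_, hscalar⟩ => ?_⟩
  obtain ⟨c, hc⟩ := hscalar _ hf
  exact hnot c hc

end GBTAone
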